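/- Let g₁(y₁,…,y₇) = y₁·(y₂y₃ + 2y₄y₅y₆ − y₆² − y₂y₅² − y₃y₄²) − y₇². The set of singular points of the hypersurface {g₁ = 0} in ℂ⁷, i.e. points y ∈ ℂ⁷ with g₁(y) = 0 and ∇g₁(y) = 0, is exactly the union of the two sets A = {y : y₁ = 0, y₇ = 0, y₂y₃ + 2y₄y₅y₆ − y₆² − y₂y₅² − y₃y₄² = 0} and B = {y : y₇ = 0, y₂ = y₄², y₃ = y₅², y₆ = y₄y₅}. -/
import Mathlib


open MvPolynomial

/-- g₁(y₁,…,y₇) = y₁(y₂y₃ + 2y₄y₅y₆ − y₆² − y₂y₅² − y₃y₄²) − y₇²,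
with variables y₁,…,y₇ indexed by `Fin 7`. -/
noncomputable def g1Poly : MvPolynomial (Fin 7) ℂ :=
  X 0 * (X 1 * X 2 + 2 * X 3 * X 4 * X 5 - X 5 ^ 2 - X 1 * X 4 ^ 2 - X 2 * X 3 ^ 2)
    - X 6 ^ 2

lemma pd2 (i : Fin 7) : pderiv i (2 : MvPolynomial (Fin 7) ℂ) = 0 := by
  rw [show (2 : MvPolynomial (Fin 7) ℂ) = C 2 from (map_ofNat C 2).symm, pderiv_C]

/-- The singular locus of the hypersurface {g₁ = 0} ⊂ ℂ⁷ is exactly the union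
A ∪ B with A = {y₁ = 0, y₇ = 0, y₂y₃+2y₄y₅y₆−y₆²−y₂y₅²−y₃y₄² = 0}
and B = {y₇ = 0, y₂ = y₄², y₃ = y₅², y₆ = y₄y₅}. -/
theorem singular_locus_g1 (y : Fin 7 → ℂ) :
    (eval y g1Poly = 0 ∧ ∀ i : Fin 7, eval y (pderiv i g1Poly) = 0) ↔
    ((y 0 = 0 ∧ y 6 = 0 ∧
        y 1 * y 2 + 2 * y 3 * y 4 * y 5 - y 5 ^ 2 - y 1 * y 4 ^ 2 - y 2 * y 3 ^ 2 = 0) ∨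
      (y 6 = 0 ∧ y 1 = y 3 ^ 2 ∧ y 2 = y 4 ^ 2 ∧ y 5 = y 3 * y 4)) := by
  constructor
  · rintro ⟨hg, h⟩
    have h0 := h 0; have h1 := h 1; have h2 := h 2
    have h5 := h 5
    simp [g1Poly, pderiv_X, pd2] at h0 h1 h2 h5 hg
    have h6' : y 6 = 0 := by
      have hsq : y 6 ^ 2 = 0 := by linear_combination y 0 * h0 - hg
      exact pow_eq_zero_iff (n := 2) (by norm_num) |>.mp hsq
    by_cases hy0 : y 0 = 0
    · exact Or.inl ⟨hy0, h6', h0⟩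
    · refine Or.inr ⟨h6', ?_, ?_, ?_⟩
      · rcases h2 with h | h; · exact absurd h hy0
        linear_combination h
      · rcases h1 with h | h; · exact absurd h hy0
        linear_combination h
      · rcases h5 with h | h; · exact absurd h hy0
        linear_combination -h / 2
  · rintro (⟨h0, h6, hq⟩ | ⟨h6, h1, h2, h5⟩)
    · refine ⟨?_, fun i => ?_⟩
      · simp [g1Poly, h0, h6]
      · fin_cases i <;> simp [g1Poly, pderiv_X, pd2, h0, h6] <;> linear_combination hq
    · refine ⟨?_, fun i => ?_⟩
      · simp [g1Poly, h6, h1, h2, h5]; first | (right; ring) | ring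
      · fin_cases i <;> simp [g1Poly, pderiv_X, pd2, h6, h1, h2, h5] <;> first | (right; ring) | ring
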